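/- Let G be a graph, C a longest cycle in G with a fixed orientation, and P = x→y a longest path in G∖C of length p̄ ≥ 0 with N_C(x) = N_C(y) and |N_C(x)| ≥ 2. Let ξ₁,…,ξ_s be the vertices of N_C(x) in consecutive order on C, defining elementary segments I_i = ξ_i→ξ_{i+1}. If L is an intermediate path between two distinct elementary segments I_a and I_b (i.e., L is a path from a vertex z in the interior of I_a to a vertex w in the interior of I_b whose only vertices on C ∪ P are z and w), then |I_a| + |I_b| ≥ 2p̄ + 2|L| + 4. -/

import Mathlib

open SimpleGraph

namespace ToughPaper

variable {V : Type*}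

/-- Number of connected components of the subgraph induced on the complement of `S`. -/
noncomputable def numComp (G : SimpleGraph V) (S : Set V) : ℕ :=
  Nat.card (G.induce Sᶜ).ConnectedComponent

/-- The toughness of `G` is greater than 1: `|S| > s(G∖S)` for every cutset `S`. -/
def ToughGtOne [Fintype V] (G : SimpleGraph V) : Prop :=
  ∀ S : Finset V, 1 < numComp G ↑S → numComp G ↑S < S.card

/-- The toughness of `G` is at most 1: some cutset `S` has `|S| ≤ s(G∖S)`. -/
def ToughLeOne [Fintype V] (G : SimpleGraph V) : Prop :=
  ∃ S : Finset V, 1 < numComp G ↑S ∧ S.card ≤ numComp G ↑S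

/-- `G` is `k`-connected: more than `k` vertices and no cutset of size `< k`. -/
def KConnected [Fintype V] (k : ℕ) (G : SimpleGraph V) : Prop :=
  k < Fintype.card V ∧ ∀ S : Finset V, S.card < k → (G.induce (↑S : Set V)ᶜ).Connected

/-- The (vertex) connectivity `κ(G)`. -/
noncomputable def conn [Fintype V] (G : SimpleGraph V) : ℕ :=
  sSup {k | KConnected k G}

/-- `C` is a longest cycle in `G`. -/
def IsLongestCycle (G : SimpleGraph V) {v : V} (C : G.Walk v v) : Prop :=
  C.IsCycle ∧ ∀ (u : V) (D : G.Walk u u), D.IsCycle → D.length ≤ C.length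

/-- `P` is a longest path among paths of `G` avoiding the vertex list `W`
(i.e. a longest path of `G ∖ W`). -/
def IsLongestPathOff (G : SimpleGraph V) (W : List V) {x y : V} (P : G.Walk x y) : Prop :=
  P.IsPath ∧ (∀ u ∈ P.support, u ∉ W) ∧
  ∀ (a b : V) (Q : G.Walk a b), Q.IsPath → (∀ u ∈ Q.support, u ∉ W) → Q.length ≤ P.length

/-- The neighbors of `x` lying on the vertex list `W` (e.g. `N_C(x)` for `W = C.support`). -/
def nbrsOn (G : SimpleGraph V) (W : List V) (x : V) : Set V :=
  {u | u ∈ W ∧ G.Adj x u}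

/-- The number of edges of the oriented arc of the closed walk `C` from `a` to `b`. -/
noncomputable def arcLen [DecidableEq V] {G : SimpleGraph V} {v : V}
    (C : G.Walk v v) (a b : V) : ℕ :=
  if h : ∃ (ha : a ∈ C.support), b ∈ (C.rotate a ha).support then
    ((C.rotate a h.choose).takeUntil b h.choose_spec).length
  else 0

/-- The vertices of the oriented arc of `C` from `a` to `b`. -/
noncomputable def arcSupport [DecidableEq V] {G : SimpleGraph V} {v : V}
    (C : G.Walk v v) (a b : V) : List V :=
  if h : ∃ (ha : a ∈ C.support), b ∈ (C.rotate a ha).support then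
    ((C.rotate a h.choose).takeUntil b h.choose_spec).support
  else []

/-- The successor of `a` on the oriented closed walk `C`. -/
noncomputable def cycSucc [DecidableEq V] {G : SimpleGraph V} {v : V}
    (C : G.Walk v v) (a : V) : V :=
  if h : a ∈ C.support then (C.rotate a h).getVert 1 else a

/-- The predecessor of `a` on the oriented closed walk `C`. -/
noncomputable def cycPred [DecidableEq V] {G : SimpleGraph V} {v : V}
    (C : G.Walk v v) (a : V) : V :=
  if h : a ∈ C.support then (C.rotate a h).getVert ((C.rotate a h).length - 1) else a

/-- `a` and `b` are consecutive elements of `N` on `C`; the arc `a→b` is then an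
elementary segment created by `N`. -/
def ConsecOnC [DecidableEq V] {G : SimpleGraph V} {v : V}
    (C : G.Walk v v) (N : Set V) (a b : V) : Prop :=
  a ∈ N ∧ b ∈ N ∧ a ≠ b ∧ ∀ w ∈ arcSupport C a b, w ≠ a → w ≠ b → w ∉ N

/-- `u` is an interior vertex of the arc `a→b` of `C`. -/
def InteriorArc [DecidableEq V] {G : SimpleGraph V} {v : V}
    (C : G.Walk v v) (a b : V) (u : V) : Prop :=
  u ∈ arcSupport C a b ∧ u ≠ a ∧ u ≠ b

/-- `L` is an intermediate path between the elementary segments `a₁→b₁` and `a₂→b₂`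
(created by `N` on `C`), relative to the path with vertex list `Psupp`. -/
def IsInterPath [DecidableEq V] (G : SimpleGraph V) {v z w : V} (C : G.Walk v v)
    (Psupp : List V) (N : Set V) (a₁ b₁ a₂ b₂ : V) (L : G.Walk z w) : Prop :=
  ConsecOnC C N a₁ b₁ ∧ ConsecOnC C N a₂ b₂ ∧ a₁ ≠ a₂ ∧
  L.IsPath ∧ 0 < L.length ∧ InteriorArc C a₁ b₁ z ∧ InteriorArc C a₂ b₂ w ∧
  ∀ u ∈ L.support, (u ∈ C.support ∨ u ∈ Psupp) → u = z ∨ u = w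

/-- Vertex type of the Petersen graph: 2-element subsets of a 5-element set. -/
def PetersenV := {s : Finset (Fin 5) // s.card = 2}

instance : Fintype PetersenV := inferInstanceAs (Fintype {s : Finset (Fin 5) // s.card = 2})
instance : DecidableEq PetersenV := inferInstanceAs (DecidableEq {s : Finset (Fin 5) // s.card = 2})

/-- The Petersen graph as the Kneser graph `K(5,2)`. -/
def petersen : SimpleGraph PetersenV where
  Adj a b := Disjoint a.1 b.1 ∧ a ≠ b
  symm := ⟨fun a b h => ⟨h.1.symm, h.2.symm⟩⟩
  loopless := ⟨fun a h => h.2 rfl⟩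

instance : DecidableRel petersen.Adj :=
  fun a b => inferInstanceAs (Decidable (Disjoint a.1 b.1 ∧ a ≠ b))


end ToughPaper

/-!
Split `I_a = ξa → ξa'` at `z` and `I_b = ξb → ξb'` at `w`. Because `N_C(x) = N_C(y)`, any two
distinct `c, d ∈ N_C(x)` are joined by the ear `c x P y d` of `C`, of length `p̄ + 2` and disjoint
from `L`. The ears `L` and `ξa' x P y ξb'` have alternating ends on `C`, and so do `ξa x P y ξb`
and `L`; exchanging two arcs of `C` for such a pair of ears yields a cycle, so by maximality of
`C` each pair is no longer than the arcs it replaces: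
`|L| + p̄ + 2 ≤ |z → ξa'| + |w → ξb'|` and `p̄ + 2 + |L| ≤ |ξa → z| + |ξb → w|`.
Adding the two inequalities gives the claim.
-/

namespace List

theorem IsRotated.eq_of_getLast?_eq {α : Type*} {l l' : List α} (h : l ~r l') (hl : l.Nodup)
    (hlast : l.getLast? = l'.getLast?) : l = l' := by
  obtain ⟨n, hn, hrot⟩ := isRotated_iff_mod.1 h.reverse
  rw [length_reverse] at hn
  suffices n = 0 ∨ n = l.length by
    rcases this with rfl | rfl
    · simpa using hrot
    · rwa [← length_reverse, rotate_length, reverse_inj] at hrot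
  refine hn.lt_or_eq.imp_left fun hn => ?_
  have hlen : 0 < l.reverse.length := by simp; omega
  have h0 : l.reverse[n]? = l.reverse[0]? := by
    rw [← head?_rotate (by simpa using hn), hrot, head?_reverse, ← hlast, ← head?_reverse,
      head?_eq_getElem?]
  rwa [getElem?_eq_getElem (by simpa using hn), getElem?_eq_getElem hlen, Option.some_inj,
    (nodup_reverse.2 hl).getElem_inj_iff] at h0

end List

namespace SimpleGraph.Walk

variable {V : Type*} {G : SimpleGraph V} {u v w a b x : V}

theorem eq_of_isRotated_support_tail {c c' : G.Walk u u} (hc : c.support.tail.Nodup)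
    (h : c.support.tail ~r c'.support.tail) : c = c' := by
  apply ext_support
  rw [← cons_tail_support c, ← cons_tail_support c', h.eq_of_getLast?_eq hc ?_]
  have hlen : c.support.length = c'.support.length := by
    simpa using h.perm.length_eq
  simp [List.getLast?_tail, hlen, List.getLast?_eq_some_getLast]

theorem IsPath.mem_support_tail_iff {p : G.Walk u v} (hp : p.IsPath) :
    x ∈ p.support.tail ↔ x ∈ p.support ∧ x ≠ u := by
  refine ⟨fun h => ⟨List.mem_of_mem_tail h, ?_⟩,
    fun h => ((mem_support_iff p).1 h.1).resolve_left h.2⟩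
  rintro rfl
  exact (List.nodup_cons.1 (cons_tail_support p ▸ hp.support_nodup)).1 h

theorem IsPath.append_of_inter {p : G.Walk u v} {q : G.Walk v w} (hp : p.IsPath) (hq : q.IsPath)
    (h : ∀ x ∈ p.support, x ∈ q.support → x = v) : (p.append q).IsPath := by
  rw [isPath_def, support_append, List.nodup_append]
  refine ⟨hp.support_nodup, hq.support_nodup.sublist (List.tail_sublist _), ?_⟩
  rintro x hx _ hy rfl
  exact (hq.mem_support_tail_iff.1 hy).2 (h x hx (List.mem_of_mem_tail hy))

theorem IsCycle.disjoint_support_of_append {p₁ p₂ p₃ p₄ : V} {A₁ : G.Walk p₁ p₂}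
    {A₂ : G.Walk p₂ p₃} {A₃ : G.Walk p₃ p₄} {A₄ : G.Walk p₄ p₁}
    (hc : (A₁.append (A₂.append (A₃.append A₄))).IsCycle) (hA₁ : ¬A₁.Nil) (hA₃ : ¬A₃.Nil) :
    A₂.support.Disjoint A₄.support := by
  have hA₃₄ : ¬(A₃.append A₄).Nil := fun h => hA₃ (nil_append_iff.1 h).1
  have hdisj := (hc.isPath_of_append_right hA₁).disjoint_support_of_append hA₃₄
  rw [support_tail_of_not_nil _ hA₃₄, tail_support_append] at hdisj
  intro u hu₂ hu₄
  rcases (mem_support_iff A₄).1 hu₄ with rfl | hu₄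
  · exact hdisj hu₂ (List.mem_append_left _ (end_mem_tail_support hA₃))
  · exact hdisj hu₂ (List.mem_append_right _ hu₄)

variable [DecidableEq V]

theorem IsCycle.rotate_eq_of_rotate_eq_append {c : G.Walk v v} (hc : c.IsCycle)
    (ha : a ∈ c.support) {p : G.Walk a b} {q : G.Walk b a} (h : c.rotate a ha = p.append q)
    (hb : b ∈ c.support) : c.rotate b hb = q.append p := by
  refine eq_of_isRotated_support_tail (hc.rotate hb).support_nodup ?_
  have hpq : (c.rotate a ha).support.tail ~r (q.append p).support.tail := by
    rw [h, tail_support_append, tail_support_append]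
    exact List.isRotated_append
  exact ((support_rotate ..).trans (support_rotate ..).symm).trans hpq

theorem takeUntil_append_of_notMem_left {p : G.Walk u v} (q : G.Walk v w) (hx : x ∉ p.support)
    (hxq : x ∈ q.support) :
    (p.append q).takeUntil x ((mem_support_append_iff ..).2 (Or.inr hxq)) =
      p.append (q.takeUntil x hxq) := by
  induction p with
  | nil => rfl
  | cons h p ih =>
    simp only [support_cons, List.mem_cons, not_or] at hx
    simp only [cons_append]
    rw [takeUntil_cons ((mem_support_append_iff ..).2 (Or.inr hxq)) (Ne.symm hx.1), ih q hx.2]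

end SimpleGraph.Walk

namespace ToughPaper

variable {V : Type*} {G : SimpleGraph V}

/-- Exchanging the arcs `A₁`, `A₃` of `c` for the crossing ears gives the cycle `E₁ A₂⁻¹ E₂ A₄`. -/
theorem IsLongestCycle.length_add_length_le_of_crossing {p₁ p₂ p₃ p₄ : V} {c : G.Walk p₁ p₁}
    (hc : IsLongestCycle G c) {A₁ : G.Walk p₁ p₂} {A₂ : G.Walk p₂ p₃} {A₃ : G.Walk p₃ p₄}
    {A₄ : G.Walk p₄ p₁} (hcA : c = A₁.append (A₂.append (A₃.append A₄)))
    {E₁ : G.Walk p₁ p₃} {E₂ : G.Walk p₂ p₄} (hE₁ : E₁.IsPath) (hE₂ : E₂.IsPath)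
    (hE₁c : ∀ u ∈ E₁.support, u ∈ c.support → u = p₁ ∨ u = p₃)
    (hE₂c : ∀ u ∈ E₂.support, u ∈ c.support → u = p₂ ∨ u = p₄)
    (hE : E₁.support.Disjoint E₂.support) :
    E₁.length + E₂.length ≤ A₁.length + A₃.length := by
  subst hcA
  have h12 : p₁ ≠ p₂ := fun h => hE E₁.start_mem_support (h ▸ E₂.start_mem_support)
  have h23 : p₂ ≠ p₃ := fun h => hE E₁.end_mem_support (h ▸ E₂.start_mem_support)
  have h34 : p₃ ≠ p₄ := fun h => hE E₁.end_mem_support (h ▸ E₂.end_mem_support)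
  have hrest := hc.1.isPath_of_append_right (Walk.not_nil_of_ne h12)
  have hA₂₄ := hc.1.disjoint_support_of_append (Walk.not_nil_of_ne h12) (Walk.not_nil_of_ne h34)
  have hcE₁ : ∀ u ∈ E₁.support, u ∈ A₂.support ∨ u ∈ A₄.support → u = p₁ ∨ u = p₃ :=
    fun u hu h => hE₁c u hu (by simp only [Walk.mem_support_append_iff]; tauto)
  have hcE₂ : ∀ u ∈ E₂.support, u ∈ A₂.support ∨ u ∈ A₄.support → u = p₂ ∨ u = p₄ :=
    fun u hu h => hE₂c u hu (by simp only [Walk.mem_support_append_iff]; tauto)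
  have hW₁ : (E₁.append A₂.reverse).IsPath := by
    refine hE₁.append_of_inter hrest.of_append_left.reverse fun u hu hu₂ => ?_
    rw [Walk.support_reverse, List.mem_reverse] at hu₂
    refine (hcE₁ u hu (Or.inl hu₂)).resolve_left ?_
    rintro rfl
    exact hA₂₄ hu₂ A₄.end_mem_support
  have hW₂ : (E₂.append A₄).IsPath := by
    refine hE₂.append_of_inter hrest.of_append_right.of_append_right fun u hu hu₄ => ?_
    refine (hcE₂ u hu (Or.inr hu₄)).resolve_left ?_
    rintro rfl
    exact hA₂₄ A₂.start_mem_support hu₄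
  have hcyc : ((E₁.append A₂.reverse).append (E₂.append A₄)).IsCycle := by
    refine hW₁.isCycle_append hW₂ (fun u hu₁ hu₂ => ?_) (Or.inl ?_)
    · obtain ⟨hu₁, hne₁⟩ := hW₁.mem_support_tail_iff.1 hu₁
      obtain ⟨hu₂, hne₂⟩ := hW₂.mem_support_tail_iff.1 hu₂
      simp only [Walk.mem_support_append_iff, Walk.support_reverse, List.mem_reverse] at hu₁ hu₂
      rcases hu₁ with h₁ | h₁ <;> rcases hu₂ with h₂ | h₂
      · exact hE h₁ h₂
      · rcases hcE₁ u h₁ (Or.inr h₂) with rfl | rfl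
        exacts [hne₁ rfl, hA₂₄ A₂.end_mem_support h₂]
      · rcases hcE₂ u h₂ (Or.inl h₁) with rfl | rfl
        exacts [hne₂ rfl, hA₂₄ h₁ A₄.start_mem_support]
      · exact hA₂₄ h₁ h₂
    · have h13 : p₁ ≠ p₃ := fun h => hA₂₄ A₂.end_mem_support (h ▸ A₄.end_mem_support)
      rw [Walk.length_append, Walk.length_reverse]
      have := Walk.not_nil_iff_lt_length.1 (Walk.not_nil_of_ne h13 (p := E₁))
      have := Walk.not_nil_iff_lt_length.1 (Walk.not_nil_of_ne h23 (p := A₂))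
      omega
  have := hc.2 _ _ hcyc
  simp only [Walk.length_append, Walk.length_reverse] at this
  omega

theorem exists_ear_of_path {W : List V} {x y z w c d : V} {P : G.Walk x y} (hP : P.IsPath)
    (hPW : ∀ u ∈ P.support, u ∉ W) {L : G.Walk z w} (hLP : ∀ u ∈ L.support, u ∉ P.support)
    (hc : c ∈ W) (hd : d ∈ W) (hcL : c ∉ L.support) (hdL : d ∉ L.support) (hcd : c ≠ d)
    (hcx : G.Adj c x) (hyd : G.Adj y d) :
    ∃ E : G.Walk c d, E.IsPath ∧ E.length = P.length + 2 ∧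
      (∀ u ∈ E.support, u ∈ W → u = c ∨ u = d) ∧ E.support.Disjoint L.support := by
  have hcP : c ∉ P.support := fun h => hPW c h hc
  have hdP : d ∉ P.support := fun h => hPW d h hd
  refine ⟨.cons hcx (P.concat hyd), (hP.concat hdP hyd).cons (by simp [hcP, hcd]), by simp,
    fun u hu huW => ?_, fun u hu huL => ?_⟩ <;>
  simp only [Walk.support_cons, Walk.support_concat, List.mem_cons, List.mem_append,
    List.mem_nil_iff, or_false] at hu
  · rcases hu with h | h | h
    exacts [Or.inl h, (hPW u h huW).elim, Or.inr h]
  · rcases hu with rfl | h | rfl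
    exacts [hcL huL, hLP u huL h, hdL huL]

variable [DecidableEq V]

theorem IsLongestCycle.rotate {v u : V} {c : G.Walk v v} (hc : IsLongestCycle G c)
    (h : u ∈ c.support) : IsLongestCycle G (c.rotate u h) :=
  ⟨hc.1.rotate h, fun w D hD => by rw [Walk.length_rotate]; exact hc.2 w D hD⟩

theorem arcSupport_eq_of_rotate_eq {v a b : V} {C : G.Walk v v} (ha : a ∈ C.support)
    {c : G.Walk a a} (hc : C.rotate a ha = c) (hb : b ∈ c.support) :
    arcSupport C a b = (c.takeUntil b hb).support := by
  subst hc
  rw [arcSupport, dif_pos ⟨ha, hb⟩]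

theorem arcLen_eq_of_rotate_eq {v a b : V} {C : G.Walk v v} (ha : a ∈ C.support)
    {c : G.Walk a a} (hc : C.rotate a ha = c) (hb : b ∈ c.support) :
    arcLen C a b = (c.takeUntil b hb).length := by
  subst hc
  rw [arcLen, dif_pos ⟨ha, hb⟩]

theorem exists_rotate_eq_append_arcs {v a a' b b' : V} {C : G.Walk v v} (hC : C.IsCycle)
    (ha : a ∈ C.support) (ha' : a' ∈ C.support) (hb : b ∈ C.support) (hb' : b' ∈ C.support)
    (hb_arc : b ∈ arcSupport C a a' → b = a')
    (ha_arc : a ∈ arcSupport C b b' → a = b') :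
    ∃ (Ia : G.Walk a a') (M : G.Walk a' b) (Ib : G.Walk b b') (O : G.Walk b' a),
      C.rotate a ha = Ia.append (M.append (Ib.append O)) ∧
      arcSupport C a a' = Ia.support ∧ arcLen C a a' = Ia.length ∧
      arcSupport C b b' = Ib.support ∧ arcLen C b b' = Ib.length := by
  set D := C.rotate a ha
  have ha'D : a' ∈ D.support := (Walk.mem_support_rotate_iff ..).2 ha'
  have hsa : arcSupport C a a' = (D.takeUntil a' ha'D).support :=
    arcSupport_eq_of_rotate_eq ha rfl ha'D
  have hbR : b ∈ (D.dropUntil a' ha'D).support := by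
    have hbD : b ∈ D.support := (Walk.mem_support_rotate_iff ..).2 hb
    rw [← D.take_spec ha'D, Walk.mem_support_append_iff] at hbD
    rcases hbD with h | h
    · rw [hb_arc (hsa ▸ h)]
      exact Walk.start_mem_support _
    · exact h
  set Ia := D.takeUntil a' ha'D
  set R := D.dropUntil a' ha'D
  set M := R.takeUntil b hbR
  set R' := R.dropUntil b hbR
  have hDb : D = (Ia.append M).append R' := by rw [← Walk.append_assoc, R.take_spec, D.take_spec]
  have hE := hC.rotate_eq_of_rotate_eq_append ha hDb hb
  have hb'E : b' ∈ (R'.append (Ia.append M)).support := by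
    rw [← hE]; exact (Walk.mem_support_rotate_iff ..).2 hb'
  have hb'R' : b' ∈ R'.support := by
    by_contra hn
    have hb'IaM := ((Walk.mem_support_append_iff ..).1 hb'E).resolve_left hn
    refine hn (ha_arc ?_ ▸ R'.end_mem_support)
    rw [arcSupport_eq_of_rotate_eq hb hE hb'E, Walk.takeUntil_append_of_notMem_left _ hn hb'IaM]
    exact (Walk.mem_support_append_iff ..).2 (Or.inl R'.end_mem_support)
  have hIb : (R'.append (Ia.append M)).takeUntil b' hb'E = R'.takeUntil b' hb'R' :=
    Walk.takeUntil_append_of_mem_left _ _ hb'R'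
  refine ⟨Ia, M, R'.takeUntil b' hb'R', R'.dropUntil b' hb'R', ?_, hsa,
    arcLen_eq_of_rotate_eq ha rfl ha'D, ?_, ?_⟩
  · rw [R'.take_spec, hDb, Walk.append_assoc]
  · rw [arcSupport_eq_of_rotate_eq hb hE hb'E, hIb]
  · rw [arcLen_eq_of_rotate_eq hb hE hb'E, hIb]

theorem mem_support_of_mem_arcSupport {v a b u : V} {C : G.Walk v v}
    (h : u ∈ arcSupport C a b) : u ∈ C.support := by
  unfold arcSupport at h
  split_ifs at h
  · exact (Walk.mem_support_rotate_iff ..).1 (Walk.support_takeUntil_subset_support _ _ h)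
  · simp at h

theorem IsInterPath.exists_ear {v x y z w a₁ b₁ a₂ b₂ c d : V} {C : G.Walk v v}
    {P : G.Walk x y} {L : G.Walk z w}
    (hL : IsInterPath G C P.support (nbrsOn G C.support x) a₁ b₁ a₂ b₂ L) (hP : P.IsPath)
    (hPC : ∀ u ∈ P.support, u ∉ C.support) (hN : nbrsOn G C.support x = nbrsOn G C.support y)
    (hc : c ∈ nbrsOn G C.support x) (hd : d ∈ nbrsOn G C.support x) (hcd : c ≠ d) :
    ∃ E : G.Walk c d, E.IsPath ∧ E.length = P.length + 2 ∧
      (∀ u ∈ E.support, u ∈ C.support → u = c ∨ u = d) ∧ E.support.Disjoint L.support := by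
  obtain ⟨⟨-, -, -, hI₁⟩, ⟨-, -, -, hI₂⟩, -, -, -, hz, hw, hLCP⟩ := hL
  have hLN : ∀ {u}, u ∈ nbrsOn G C.support x → u ∉ L.support := by
    intro u huN hu
    rcases hLCP u hu (Or.inl huN.1) with rfl | rfl
    exacts [hI₁ u hz.1 hz.2.1 hz.2.2 huN, hI₂ u hw.1 hw.2.1 hw.2.2 huN]
  have hLP : ∀ u ∈ L.support, u ∉ P.support := fun u hu huP => by
    rcases hLCP u hu (Or.inr huP) with rfl | rfl
    exacts [hPC u huP (mem_support_of_mem_arcSupport hz.1),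
      hPC u huP (mem_support_of_mem_arcSupport hw.1)]
  exact exists_ear_of_path hP hPC hLP hc.1 hd.1 (hLN hc) (hLN hd) hcd hc.2.symm (hN ▸ hd).2

theorem lemma2_a1_general {V : Type*} [DecidableEq V]
    (G : SimpleGraph V) {v x y ξa ξa' ξb ξb' z w : V}
    (C : G.Walk v v) (P : G.Walk x y) (L : G.Walk z w)
    (hC : IsLongestCycle G C) (hP : IsLongestPathOff G C.support P)
    (hN : nbrsOn G C.support x = nbrsOn G C.support y)
    (hL : IsInterPath G C P.support (nbrsOn G C.support x) ξa ξa' ξb ξb' L) :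
    2 * P.length + 2 * L.length + 4 ≤ arcLen C ξa ξa' + arcLen C ξb ξb' := by
  have ⟨⟨ha, ha', haa', hIa⟩, ⟨hb, hb', hbb', hIb⟩, hab, hLpath, _, hz, hw, hLCP⟩ := hL
  obtain ⟨Ia, M, Ib, O, hD, hsa, hla, hsb, hlb⟩ := exists_rotate_eq_append_arcs hC.1 ha.1 ha'.1
    hb.1 hb'.1 (fun h => by_contra fun hne => hIa _ h (Ne.symm hab) hne hb)
    (fun h => by_contra fun hne => hIb _ h hab hne ha)
  have ha'b' : ξa' ≠ ξb' := fun h =>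
    ((hD ▸ hC.1.rotate ha.1).disjoint_support_of_append (Walk.not_nil_of_ne haa')
      (Walk.not_nil_of_ne hbb')) M.start_mem_support (h ▸ O.start_mem_support)
  obtain ⟨EA, hEA, hEAlen, hEAC, hEAL⟩ := hL.exists_ear hP.1 hP.2.1 hN ha' hb' ha'b'
  obtain ⟨EB, hEB, hEBlen, hEBC, hEBL⟩ := hL.exists_ear hP.1 hP.2.1 hN ha hb hab
  obtain ⟨ta, ua, rfl⟩ : ∃ (ta : G.Walk ξa z) (ua : G.Walk z ξa'), ta.append ua = Ia :=
    ⟨_, _, Ia.take_spec (hsa ▸ hz.1)⟩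
  obtain ⟨tb, ub, rfl⟩ : ∃ (tb : G.Walk ξb w) (ub : G.Walk w ξb'), tb.append ub = Ib :=
    ⟨_, _, Ib.take_spec (hsb ▸ hw.1)⟩
  have hzC := mem_support_of_mem_arcSupport hz.1
  have hB := (hC.rotate ha.1).length_add_length_le_of_crossing (A₁ := ta) (A₂ := ua.append M)
    (A₃ := tb) (A₄ := ub.append O) (by rw [hD]; simp only [Walk.append_assoc]) hEB hLpath
    (fun u hu huC => hEBC u hu ((Walk.mem_support_rotate_iff ..).1 huC))
    (fun u hu huC => hLCP u hu (.inl ((Walk.mem_support_rotate_iff ..).1 huC))) hEBL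
  have hDz : C.rotate z hzC = ua.append ((M.append tb).append (ub.append (O.append ta))) := by
    rw [hC.1.rotate_eq_of_rotate_eq_append ha.1 (p := ta)
      (q := ua.append (M.append ((tb.append ub).append O)))
      (by rw [hD]; simp only [Walk.append_assoc]) hzC]
    simp only [Walk.append_assoc]
  have hA := (hC.rotate hzC).length_add_length_le_of_crossing hDz hLpath hEA
    (fun u hu huC => hLCP u hu (.inl ((Walk.mem_support_rotate_iff ..).1 huC)))
    (fun u hu huC => hEAC u hu ((Walk.mem_support_rotate_iff ..).1 huC)) hEAL.symm
  rw [hla, hlb]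
  simp only [Walk.length_append] at hA hB ⊢
  omega

/-- **Lemma 2 (a1).** With `C` a longest cycle, `P = x→y` a longest path in `G ∖ C` of
length `p̄ ≥ 0`, `N_C(x) = N_C(y)`, `|N_C(x)| ≥ 2`: if `L` is an intermediate path between
two distinct elementary segments `I_a = ξ_a→ξ_a'` and `I_b = ξ_b→ξ_b'`, then
`|I_a| + |I_b| ≥ 2p̄ + 2|L| + 4`. -/
theorem lemma2_a1 {V : Type*} [Fintype V] [DecidableEq V]
    (G : SimpleGraph V) {v x y ξa ξa' ξb ξb' z w : V}
    (C : G.Walk v v) (P : G.Walk x y) (L : G.Walk z w)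
    (hC : IsLongestCycle G C) (hP : IsLongestPathOff G C.support P)
    (hN : nbrsOn G C.support x = nbrsOn G C.support y)
    (hcard : 2 ≤ (nbrsOn G C.support x).ncard)
    (hL : IsInterPath G C P.support (nbrsOn G C.support x) ξa ξa' ξb ξb' L) :
    2 * P.length + 2 * L.length + 4 ≤ arcLen C ξa ξa' + arcLen C ξb ξb' :=
  lemma2_a1_general G C P L hC hP hN hL

end ToughPaper
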